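/- Let M be a finite von Neumann algebra with faithful normal tracial state ρ, H^∞ a maximal subdiagonal subalgebra with D = H^∞ ∩ (H^∞)*, α a normalized unitarily invariant continuous ‖·‖_{1,ρ}-dominating norm, and u a partial isometry in M with u*u ∈ D. Then the α-closure of uH^∞ equals uH^α, where H^α is the α-closure of H^∞ in L^α(M, ρ). -/

import Mathlib

open MeasureTheory Filter Topology

noncomputable section

namespace Paper

variable {H : Type*} [NormedAddCommGroup H] [InnerProductSpace ℂ H] [CompleteSpace H]

/-- the absolute value `|x| = (x* x)^{1/2}` of a bounded operator, via the
continuous functional calculus. -/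
def oabs (x : H →L[ℂ] H) : H →L[ℂ] H := CFC.sqrt (star x * x)

/-- `x` is an (orthogonal) projection. -/
def IsProj (x : H →L[ℂ] H) : Prop := star x = x ∧ x * x = x

/-- bounded convergence of a sequence of operators in the weak operator topology. -/
def WOTTendsto (f : ℕ → H →L[ℂ] H) (x : H →L[ℂ] H) : Prop :=
  (∃ C : ℝ, ∀ n, ‖f n‖ ≤ C) ∧
  ∀ ξ η : H, Tendsto (fun n => (inner ℂ (f n ξ) η : ℂ)) atTop (𝓝 (inner ℂ (x ξ) η))

/-- the (sequential, bounded) weak* closure of a set of operators. -/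
def wstarClosure (S : Set (H →L[ℂ] H)) : Set (H →L[ℂ] H) :=
  {x | ∃ f : ℕ → H →L[ℂ] H, (∀ n, f n ∈ S) ∧ WOTTendsto f x}

/-- a faithful normal tracial state on a von Neumann algebra `M`. -/
structure FNTS (M : VonNeumannAlgebra H) where
  τ : (H →L[ℂ] H) →ₗ[ℂ] ℂ
  unital : τ 1 = 1
  pos : ∀ x ∈ M, 0 ≤ (τ (star x * x)).re ∧ (τ (star x * x)).im = 0
  tracial : ∀ x ∈ M, ∀ y ∈ M, τ (x * y) = τ (y * x)
  faithful : ∀ x ∈ M, τ (star x * x) = 0 → x = 0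
  normal : ∀ (f : ℕ → H →L[ℂ] H) (x : H →L[ℂ] H), (∀ n, f n ∈ M) → x ∈ M →
    WOTTendsto f x → Tendsto (fun n => τ (f n)) atTop (𝓝 (τ x))

/-- the center of a von Neumann algebra, as a set of operators. -/
def centerSet (M : VonNeumannAlgebra H) : Set (H →L[ℂ] H) :=
  {z | z ∈ M ∧ ∀ x ∈ M, z * x = x * z}

/-- `α` is a norm on (the subspace `M` of) `B(H)`. -/
structure IsNormOn (M : VonNeumannAlgebra H) (α : (H →L[ℂ] H) → ℝ) : Prop where
  nonneg : ∀ x ∈ M, 0 ≤ α x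
  definite : ∀ x ∈ M, α x = 0 → x = 0
  triangle : ∀ x ∈ M, ∀ y ∈ M, α (x + y) ≤ α x + α y
  homog : ∀ (c : ℂ), ∀ x ∈ M, α (c • x) = ‖c‖ * α x

/-- `α ∈ N(M,τ)` : a normalized, gauge, unitarily invariant, continuous norm on `M`. -/
structure MemN (M : VonNeumannAlgebra H) (τ : FNTS M) (α : (H →L[ℂ] H) → ℝ)
    extends IsNormOn M α : Prop where
  normalized : α 1 = 1
  gauge : ∀ x ∈ M, α x = α (oabs x)
  unitaryInv : ∀ u ∈ M, u ∈ unitary (H →L[ℂ] H) → ∀ x ∈ M, α (star u * x * u) = α x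
  continuousNorm : ∀ ε > 0, ∃ δ > 0, ∀ e ∈ M, IsProj e → (τ.τ e).re < δ → α e < ε

/-- an increasing sequence of positive central operators representing a positive
element `g` of `L¹(Z,τ)` (`Z` the center of `M`). -/
structure L1CenterDensity (M : VonNeumannAlgebra H) (τ : FNTS M)
    (g : ℕ → H →L[ℂ] H) : Prop where
  central : ∀ n, g n ∈ centerSet M
  posit : ∀ n, (g n).IsPositive
  mono : ∀ n, (g (n + 1) - g n).IsPositive
  bddTrace : ∃ C : ℝ, ∀ n, (τ.τ (g n)).re ≤ C

/-- `ρ(x) = τ(xg)` for all `x ∈ M`, where the positive `g ∈ L¹(Z,τ)` is represented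
by the increasing central sequence `gₙ`. -/
def IsDensityOf (M : VonNeumannAlgebra H) (τ : FNTS M) (g : ℕ → H →L[ℂ] H)
    (ρ : FNTS M) : Prop :=
  L1CenterDensity M τ g ∧ ∀ x ∈ M, Tendsto (fun n => τ.τ (x * g n)) atTop (𝓝 (ρ.τ x))

/-- the Fuglede–Kadison determinant `Δ(x) = exp(τ(log|x|))` of a bounded operator,
computed by monotone regularization `Δ(x) = inf_n exp(τ(log(max(|x|, 1/(n+1)))))`. -/
def FKdet (M : VonNeumannAlgebra H) (τ : FNTS M) (x : H →L[ℂ] H) : ℝ :=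
  ⨅ n : ℕ, Real.exp
    ((τ.τ (cfc (fun t : ℝ => Real.log (max t (1 / (n + 1 : ℝ)))) (oabs x))).re)

/-- positivity `Δ(g) > 0` of the Fuglede–Kadison determinant of the `L¹`-element
represented by the increasing central sequence `gₙ` : a uniform positive lower
bound for the regularized determinants. -/
def FKDetPos (M : VonNeumannAlgebra H) (τ : FNTS M) (g : ℕ → H →L[ℂ] H) : Prop :=
  ∃ d : ℝ, 0 < d ∧ ∀ n : ℕ,
    d ≤ Real.exp
      ((τ.τ (cfc (fun t : ℝ => Real.log (max t (1 / (n + 1 : ℝ)))) (g n))).re)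

/-- `α ∈ N_Δ(M,τ)` : a determinant, normalized, unitarily invariant, continuous
norm, i.e. `α ∈ N(M,τ)` and `α(x) ≥ c·τ(|x|g)` for some `c > 0` and some positive
`g ∈ L¹(M,τ)` with `Δ(g) > 0`. -/
def MemNDelta (M : VonNeumannAlgebra H) (τ : FNTS M) (α : (H →L[ℂ] H) → ℝ) : Prop :=
  MemN M τ α ∧ ∃ c : ℝ, 0 < c ∧ ∃ g : ℕ → H →L[ℂ] H, L1CenterDensity M τ g ∧
    FKDetPos M τ g ∧ ∀ x ∈ M, ∃ L : ℝ,
      Tendsto (fun n => (τ.τ (oabs x * g n)).re) atTop (𝓝 L) ∧ c * L ≤ α x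

/-- `α ∈ N₁(M,ρ)` : `α ∈ N(M,ρ)` and `α` is `c‖·‖_{1,ρ}`-dominating. -/
def MemN1 (M : VonNeumannAlgebra H) (ρ : FNTS M) (α : (H →L[ℂ] H) → ℝ) : Prop :=
  MemN M ρ α ∧ ∃ c : ℝ, 0 < c ∧ ∀ x ∈ M, c * (ρ.τ (oabs x)).re ≤ α x

/-- a (finite, maximal) subdiagonal subalgebra `H^∞` of `(M,τ)`, together with the
trace-preserving conditional expectation `Φ` onto the diagonal `D = H^∞ ∩ (H^∞)*`,
multiplicative on `H^∞`, with `H^∞ + (H^∞)*` weak* dense in `M`. -/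
structure Subdiagonal (M : VonNeumannAlgebra H) (τ : FNTS M) where
  Hinf : Set (H →L[ℂ] H)
  subset : Hinf ⊆ M
  one_mem : (1 : H →L[ℂ] H) ∈ Hinf
  add_mem : ∀ x ∈ Hinf, ∀ y ∈ Hinf, x + y ∈ Hinf
  smul_mem : ∀ (c : ℂ), ∀ x ∈ Hinf, c • x ∈ Hinf
  mul_mem : ∀ x ∈ Hinf, ∀ y ∈ Hinf, x * y ∈ Hinf
  wstarClosed : ∀ (f : ℕ → H →L[ℂ] H) (x : H →L[ℂ] H), (∀ n, f n ∈ Hinf) →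
    WOTTendsto f x → x ∈ Hinf
  dense : ∀ x ∈ M, ∃ f : ℕ → H →L[ℂ] H,
    (∀ n, ∃ a ∈ Hinf, ∃ b ∈ Hinf, f n = a + star b) ∧ WOTTendsto f x
  Φ : (H →L[ℂ] H) →ₗ[ℂ] (H →L[ℂ] H)
  Φ_mem : ∀ x ∈ M, Φ x ∈ Hinf ∧ star (Φ x) ∈ Hinf
  Φ_id : ∀ x, x ∈ Hinf → star x ∈ Hinf → Φ x = x
  Φ_pos : ∀ x ∈ M, ContinuousLinearMap.IsPositive x → (Φ x).IsPositive
  Φ_mod : ∀ d₁, d₁ ∈ Hinf → star d₁ ∈ Hinf → ∀ d₂, d₂ ∈ Hinf → star d₂ ∈ Hinf →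
    ∀ x ∈ M, Φ (d₁ * x * d₂) = d₁ * Φ x * d₂
  trace_preserving : ∀ x ∈ M, τ.τ (Φ x) = τ.τ x
  mult : ∀ x ∈ Hinf, ∀ y ∈ Hinf, Φ (x * y) = Φ x * Φ y

/-- the diagonal `D = H^∞ ∩ (H^∞)*`. -/
def Subdiagonal.D {M : VonNeumannAlgebra H} {τ : FNTS M} (S : Subdiagonal M τ) :
    Set (H →L[ℂ] H) := {x | x ∈ S.Hinf ∧ star x ∈ S.Hinf}

/-- `H₀^∞ = H^∞ ∩ ker Φ`. -/
def Subdiagonal.H0 {M : VonNeumannAlgebra H} {τ : FNTS M} (S : Subdiagonal M τ) :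
    Set (H →L[ℂ] H) := {x | x ∈ S.Hinf ∧ S.Φ x = 0}

/-- a concrete realization of the completion `L^α(M)` of `M` under the norm `α` :
a Banach space `E` containing a dense isometric copy `j` of `M`, carrying the
continuous extensions `lmul a`, `rmul a` of left and right multiplication by
elements of `M`. -/
structure LalphaSpace (M : VonNeumannAlgebra H) (α : (H →L[ℂ] H) → ℝ)
    (E : Type*) [NormedAddCommGroup E] [NormedSpace ℂ E] [CompleteSpace E] where
  j : (H →L[ℂ] H) →ₗ[ℂ] E
  j_norm : ∀ x ∈ M, ‖j x‖ = α x
  dense : DenseRange (fun x : {x : H →L[ℂ] H // x ∈ M} => j x.1)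
  lmul : (H →L[ℂ] H) → E →L[ℂ] E
  rmul : (H →L[ℂ] H) → E →L[ℂ] E
  lmul_j : ∀ a ∈ M, ∀ x ∈ M, lmul a (j x) = j (a * x)
  rmul_j : ∀ a ∈ M, ∀ x ∈ M, rmul a (j x) = j (x * a)

end Paper

theorem closure_image_eq_image_closure_of_rightInvOn {X Y : Type*} [TopologicalSpace X]
    [TopologicalSpace Y] [T2Space Y] {f : X → Y} {P : Y → X} {s : Set X}
    (hf : Continuous f) (hP : Continuous P) (hmaps : Set.MapsTo P (f '' s) s)
    (hinv : Set.RightInvOn P f (f '' s)) :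
    closure (f '' s) = f '' closure s := by
  refine Set.Subset.antisymm ?_ (image_closure_subset_closure_image hf)
  intro y hy
  have hfP : Set.EqOn (f ∘ P) id (closure (f '' s)) :=
    Set.EqOn.closure hinv (hf.comp hP) continuous_id
  exact ⟨P y, map_mem_closure hP hy hmaps, hfP hy⟩

namespace Paper

theorem LalphaSpace.image_j_image_mul {H : Type*} [NormedAddCommGroup H]
    [InnerProductSpace ℂ H] [CompleteSpace H] {M : VonNeumannAlgebra H} {α : (H →L[ℂ] H) → ℝ}
    {E : Type*} [NormedAddCommGroup E] [NormedSpace ℂ E] [CompleteSpace E]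
    (LE : LalphaSpace M α E) {u : H →L[ℂ] H} (hu : u ∈ M) {s : Set (H →L[ℂ] H)}
    (hs : s ⊆ M) :
    LE.j '' ((fun a => u * a) '' s) = LE.lmul u '' (LE.j '' s) := by
  simp only [Set.image_image]
  exact Set.image_congr fun a ha => (LE.lmul_j u hu a (hs ha)).symm

theorem closure_uHinf_eq_u_Halpha_general
    {H : Type*} [NormedAddCommGroup H] [InnerProductSpace ℂ H] [CompleteSpace H]
    (M : VonNeumannAlgebra H) (ρ : FNTS M)
    (α : (H →L[ℂ] H) → ℝ)
    (S : Subdiagonal M ρ)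
    {E : Type*} [NormedAddCommGroup E] [NormedSpace ℂ E] [CompleteSpace E]
    (LE : LalphaSpace M α E)
    (u : H →L[ℂ] H) (hu : u ∈ M)
    (hpi : u * (star u * u) = u)  -- `u` is a partial isometry
    (huD : star u * u ∈ S.D) :
    closure (LE.j '' ((fun a => u * a) '' S.Hinf)) =
      LE.lmul u '' closure (LE.j '' S.Hinf) := by
  have hus : star u ∈ M := star_mem hu
  have lmul_star_lmul : ∀ a ∈ S.Hinf,
      LE.lmul (star u) (LE.lmul u (LE.j a)) = LE.j (star u * u * a) := fun a ha => by
    rw [LE.lmul_j u hu a (S.subset ha), LE.lmul_j _ hus _ (mul_mem hu (S.subset ha)), mul_assoc]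
  rw [LE.image_j_image_mul hu S.subset]
  refine closure_image_eq_image_closure_of_rightInvOn (LE.lmul u).continuous
    (LE.lmul (star u)).continuous ?_ ?_
  · rintro _ ⟨_, ⟨a, ha, rfl⟩, rfl⟩
    rw [lmul_star_lmul a ha]
    exact Set.mem_image_of_mem _ (S.mul_mem _ huD.1 a ha)
  · rintro _ ⟨_, ⟨a, ha, rfl⟩, rfl⟩
    have hua : star u * u * a ∈ M := mul_mem (mul_mem hus hu) (S.subset ha)
    rw [lmul_star_lmul a ha, LE.lmul_j u hu _ hua, LE.lmul_j u hu a (S.subset ha),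
      ← mul_assoc, ← mul_assoc, mul_assoc u, hpi]

/-- for a partial isometry `u ∈ M` with `u*u ∈ D`, the `α`-closure
of `uH^∞` equals `uH^α`, where `H^α` is the `α`-closure of `H^∞` in
`L^α(M,ρ) = E`. -/
theorem closure_uHinf_eq_u_Halpha
    {H : Type*} [NormedAddCommGroup H] [InnerProductSpace ℂ H] [CompleteSpace H]
    (M : VonNeumannAlgebra H) (ρ : FNTS M)
    (α : (H →L[ℂ] H) → ℝ) (hα : MemN1 M ρ α)
    (S : Subdiagonal M ρ)
    {E : Type*} [NormedAddCommGroup E] [NormedSpace ℂ E] [CompleteSpace E]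
    (LE : LalphaSpace M α E)
    (u : H →L[ℂ] H) (hu : u ∈ M)
    (hpi : u * (star u * u) = u)  -- `u` is a partial isometry
    (huD : star u * u ∈ S.D) :
    closure (LE.j '' ((fun a => u * a) '' S.Hinf)) =
      LE.lmul u '' closure (LE.j '' S.Hinf) :=
  closure_uHinf_eq_u_Halpha_general M ρ α S LE u hu hpi huD

end Paper
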